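/- arXiv:2011.12632 — 5 statements merged into one kernel-verified Lean document; each statement's English description precedes it below -/
import Mathlib

section
/- Let c : [a,b] → ℝ² be an injective, regular C^{1,1} curve parametrized by arclength. Then for every point x = c(t) with t ∈ (a,b) there exists δ > 0 such that every point y in the ball B_{δ/2}(x) has a unique nearest point on the curve segment c((a,b)) ∩ B_δ(x); i.e., the nearest-point projection P : B_{δ/2}(x) → c((a,b)) ∩ B_δ(x) is well defined. -/
/-!
Near `t0` the squared distance `u ↦ ‖c u - y‖²` has derivative `2⟪c u - y, c' u⟫`, and
`⟪c t - y, c' t⟫ - ⟪c s - y, c' s⟫ = ⟪c t - c s, c' t⟫ + ⟪c s - y, c' t - c' s⟫`. By unit speed and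
the Lipschitz tangent the first term is `t - s + O(L (t - s)²)` and the second `O(‖c s - y‖ L (t - s))`,
so on a parameter interval of length `≪ 1 / L` and for `y` near `c t0` the derivative is strictly
increasing: the squared distance is strictly convex there and has a unique minimiser. Injectivity and
compactness give a ball around `c t0` meeting the curve only along that parameter interval, so this
minimiser is the unique nearest point of the localized segment.
-/

open Set Metric Filter Topology

open scoped RealInnerProductSpace

theorem norm_sub_sub_smul_le_of_lipschitzOnWith {F : Type*} [NormedAddCommGroup F]
    [NormedSpace ℝ F] {c c' : ℝ → F} {I : Set ℝ} {K : NNReal} {s t : ℝ} (hI : Convex ℝ I)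
    (hderiv : ∀ u ∈ I, HasDerivAt c (c' u) u) (hlip : LipschitzOnWith K c' I) (hs : s ∈ I)
    (ht : t ∈ I) : ‖c t - c s - (t - s) • c' t‖ ≤ K * (t - s) ^ 2 := by
  have hst : uIcc s t ⊆ I := hI.ordConnected.uIcc_subset hs ht
  have hg : ∀ u ∈ uIcc s t, HasDerivWithinAt (fun v => c v - v • c' t) (c' u - c' t) (uIcc s t) u :=
    fun u hu => by
      simpa only [one_smul] using
        ((hderiv u (hst hu)).fun_sub ((hasDerivAt_id' u).smul_const (c' t))).hasDerivWithinAt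
  have hbound : ∀ u ∈ uIcc s t, ‖c' u - c' t‖ ≤ K * |t - s| := fun u hu =>
    calc ‖c' u - c' t‖ ≤ K * ‖u - t‖ := hlip.norm_sub_le (hst hu) ht
      _ ≤ K * |t - s| := by
        rw [Real.norm_eq_abs, abs_sub_comm]
        exact mul_le_mul_of_nonneg_left (abs_sub_right_of_mem_uIcc hu) K.2
  have := (convex_uIcc s t).norm_image_sub_le_of_norm_hasDerivWithin_le hg hbound
    left_mem_uIcc right_mem_uIcc
  calc ‖c t - c s - (t - s) • c' t‖ = ‖(c t - t • c' t) - (c s - s • c' t)‖ := by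
        rw [sub_smul]; abel_nf
    _ ≤ K * |t - s| * ‖t - s‖ := this
    _ = K * (t - s) ^ 2 := by rw [Real.norm_eq_abs, mul_assoc, abs_mul_abs_self, sq]

section Curve

variable {E : Type*} [NormedAddCommGroup E] [InnerProductSpace ℝ E]
  {c c' : ℝ → E} {I : Set ℝ} {K : NNReal} {R : ℝ} {y : E}

theorem strictMonoOn_inner_sub_deriv (hI : Convex ℝ I) (hderiv : ∀ u ∈ I, HasDerivAt c (c' u) u)
    (hlip : LipschitzOnWith K c' I) (harc : ∀ u ∈ I, ‖c' u‖ = 1) (hR : ∀ u ∈ I, ‖c u - y‖ ≤ R)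
    (hsmall : ∀ s ∈ I, ∀ t ∈ I, K * (|t - s| + R) < 1) :
    StrictMonoOn (fun u => ⟪c u - y, c' u⟫) I := by
  intro s hs t ht hst
  have hts : |t - s| = t - s := abs_of_pos (sub_pos.2 hst)
  have hsplit : ⟪c t - y, c' t⟫ - ⟪c s - y, c' s⟫ =
      (t - s) + ⟪c t - c s - (t - s) • c' t, c' t⟫ + ⟪c s - y, c' t - c' s⟫ := by
    have hunit : ⟪c' t, c' t⟫ = 1 := by rw [real_inner_self_eq_norm_sq, harc t ht, one_pow]
    simp only [inner_sub_left, inner_sub_right, real_inner_smul_left, hunit]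
    ring
  have htaylor : -(K * (t - s) ^ 2) ≤ ⟪c t - c s - (t - s) • c' t, c' t⟫ := by
    refine neg_le_of_abs_le ((abs_real_inner_le_norm _ _).trans ?_)
    rw [harc t ht, mul_one]
    exact norm_sub_sub_smul_le_of_lipschitzOnWith hI hderiv hlip hs ht
  have hdrift : -(R * (K * (t - s))) ≤ ⟪c s - y, c' t - c' s⟫ := by
    refine neg_le_of_abs_le ((abs_real_inner_le_norm _ _).trans ?_)
    gcongr
    · exact (norm_nonneg _).trans (hR s hs)
    · exact hR s hs
    · rw [← hts, ← Real.norm_eq_abs]; exact hlip.norm_sub_le ht hs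
  have := hsmall s hs t ht
  rw [hts] at this
  nlinarith [sub_pos.2 hst]

theorem strictConvexOn_norm_sub_sq (hI : Convex ℝ I) (hderiv : ∀ u ∈ I, HasDerivAt c (c' u) u)
    (hlip : LipschitzOnWith K c' I) (harc : ∀ u ∈ I, ‖c' u‖ = 1) (hR : ∀ u ∈ I, ‖c u - y‖ ≤ R)
    (hsmall : ∀ s ∈ I, ∀ t ∈ I, K * (|t - s| + R) < 1) :
    StrictConvexOn ℝ I (fun u => ‖c u - y‖ ^ 2) := by
  have hf : ∀ u ∈ I, HasDerivAt (fun u => ‖c u - y‖ ^ 2) (2 * ⟪c u - y, c' u⟫) u :=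
    fun u hu => ((hderiv u hu).sub_const y).norm_sq
  refine StrictMonoOn.strictConvexOn_of_deriv hI
    (fun u hu => (hf u hu).continuousAt.continuousWithinAt) ?_
  intro s hs t ht hst
  rw [(hf s (interior_subset hs)).deriv, (hf t (interior_subset ht)).deriv]
  have := strictMonoOn_inner_sub_deriv hI hderiv hlip harc hR hsmall (interior_subset hs)
    (interior_subset ht) hst
  simp only at this
  linarith

theorem strictConvexOn_Icc_norm_sub_sq {t₀ r : ℝ}
    (hderiv : ∀ u ∈ Icc (t₀ - r) (t₀ + r), HasDerivAt c (c' u) u)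
    (hlip : LipschitzOnWith K c' (Icc (t₀ - r) (t₀ + r)))
    (harc : ∀ u ∈ Icc (t₀ - r) (t₀ + r), ‖c' u‖ = 1) (hsmall : K * (4 * r) < 1)
    (hy : dist y (c t₀) ≤ r) :
    StrictConvexOn ℝ (Icc (t₀ - r) (t₀ + r)) fun u => ‖c u - y‖ ^ 2 := by
  have hr : 0 ≤ r := dist_nonneg.trans hy
  have hdiam : ∀ s ∈ Icc (t₀ - r) (t₀ + r), ∀ t ∈ Icc (t₀ - r) (t₀ + r), |t - s| ≤ 2 * r :=
    fun s hs t ht => abs_sub_le_iff.2 ⟨by linarith [ht.2, hs.1], by linarith [ht.1, hs.2]⟩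
  have ht₀ : t₀ ∈ Icc (t₀ - r) (t₀ + r) := ⟨by linarith, by linarith⟩
  refine strictConvexOn_norm_sub_sq (convex_Icc _ _) hderiv hlip harc (R := 2 * r)
    (fun u hu => ?_) fun s hs t ht => ?_
  · calc ‖c u - y‖ ≤ ‖c u - c t₀‖ + ‖c t₀ - y‖ := norm_sub_le_norm_sub_add_norm_sub _ _ _
      _ ≤ 1 * ‖u - t₀‖ + r := by
        refine add_le_add ((convex_Icc _ _).norm_image_sub_le_of_norm_hasDerivWithin_le
          (fun v hv => (hderiv v hv).hasDerivWithinAt) (fun v hv => (harc v hv).le) ht₀ hu) ?_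
        rwa [← dist_eq_norm, dist_comm]
      _ ≤ 2 * r := by
        rw [one_mul, Real.norm_eq_abs]
        linarith [(abs_sub_le_iff.2 ⟨by linarith [hu.2], by linarith [hu.1]⟩ : |u - t₀| ≤ r)]
  · calc (K : ℝ) * (|t - s| + 2 * r) ≤ K * (4 * r) := by
          gcongr
          linarith [hdiam s hs t ht]
      _ < 1 := hsmall

end Curve

theorem exists_pos_forall_dist_lt_mem_of_injOn {X Y : Type*} [TopologicalSpace X] [MetricSpace Y]
    {c : X → Y} {s U : Set X} {x : X} (hs : IsCompact s) (hc : ContinuousOn c s)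
    (hinj : InjOn c s) (hx : x ∈ s) (hU : U ∈ 𝓝 x) :
    ∃ δ > 0, ∀ t ∈ s, dist (c t) (c x) < δ → t ∈ U := by
  have hclosed : IsClosed (c '' (s \ interior U)) :=
    ((hs.diff isOpen_interior).image_of_continuousOn (hc.mono sdiff_subset)).isClosed
  have hxK : c x ∉ c '' (s \ interior U) := by
    rintro ⟨t, ⟨hts, htU⟩, hct⟩
    exact htU (hinj hts hx hct ▸ mem_interior_iff_mem_nhds.2 hU)
  obtain ⟨δ, hδ, hball⟩ := Metric.isOpen_iff.1 hclosed.isOpen_compl _ hxK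
  exact ⟨δ, hδ, fun t ht hdist => by_contra fun htU =>
    hball hdist ⟨t, ⟨ht, fun h => htU (interior_subset h)⟩, rfl⟩⟩

theorem existsUnique_dist_eq_infDist_image {E : Type*} [SeminormedAddCommGroup E] {c : ℝ → E}
    {J K : Set ℝ} {y : E} {t₁ : ℝ} (hKJ : K ⊆ J) (ht₁ : t₁ ∈ K)
    (hmin : IsMinOn (fun u => dist y (c u)) J t₁)
    (hconv : StrictConvexOn ℝ J fun u => ‖c u - y‖ ^ 2) :
    ∃! p, p ∈ c '' K ∧ dist y p = infDist y (c '' K) := by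
  have hinf : infDist y (c '' K) = dist y (c t₁) :=
    le_antisymm (infDist_le_dist_of_mem (mem_image_of_mem c ht₁))
      ((le_infDist ⟨_, mem_image_of_mem c ht₁⟩).2 fun _ ⟨u, hu, hp⟩ => hp ▸ hmin (hKJ hu))
  have hsq : ∀ {t}, IsMinOn (fun u => dist y (c u)) J t →
      IsMinOn (fun u => ‖c u - y‖ ^ 2) J t := fun h u hu => by
    simp only [← dist_eq_norm, dist_comm _ y]
    exact pow_le_pow_left₀ dist_nonneg (h hu) 2
  refine ⟨c t₁, ⟨mem_image_of_mem c ht₁, hinf.symm⟩, ?_⟩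
  rintro _ ⟨⟨u, hu, rfl⟩, hdist⟩
  have humin : IsMinOn (fun u => dist y (c u)) J u := fun v hv => by
    simpa only [hdist, hinf] using hmin hv
  rw [hconv.eq_of_isMinOn (hsq humin) (hsq hmin) (hKJ hu) (hKJ ht₁)]

theorem existsUnique_dist_eq_infDist_image_inter_ball {E : Type*} [SeminormedAddCommGroup E]
    {c : ℝ → E} {J U : Set ℝ} {t₀ δ : ℝ} {y : E} (hJ : IsCompact J) (hc : ContinuousOn c J)
    (ht₀ : t₀ ∈ J) (hJU : J ⊆ U) (hloc : U ∩ c ⁻¹' ball (c t₀) δ ⊆ J)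
    (hy : dist y (c t₀) < δ / 2) (hconv : StrictConvexOn ℝ J fun u => ‖c u - y‖ ^ 2) :
    ∃! p, p ∈ c '' U ∩ ball (c t₀) δ ∧ dist y p = infDist y (c '' U ∩ ball (c t₀) δ) := by
  obtain ⟨t₁, ht₁, hmin⟩ := hJ.exists_isMinOn ⟨t₀, ht₀⟩ (f := fun u => dist y (c u))
    (continuous_dist.comp_continuousOn (continuousOn_const.prodMk hc))
  have ht₁ball : dist (c t₁) (c t₀) < δ := by
    have hcloser : dist y (c t₁) ≤ dist y (c t₀) := hmin ht₀
    linarith [dist_triangle_left (c t₁) (c t₀) y]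
  rw [← image_inter_preimage]
  exact existsUnique_dist_eq_infDist_image hloc ⟨hJU ht₁, ht₁ball⟩ hmin hconv

theorem stmt0_general
    (a b : ℝ)
    (c c' : ℝ → EuclideanSpace ℝ (Fin 2)) (L : ℝ)
    (hderiv : ∀ t ∈ Set.Icc a b, HasDerivAt c (c' t) t)
    (hlip : ∀ s ∈ Set.Icc a b, ∀ t ∈ Set.Icc a b, ‖c' s - c' t‖ ≤ L * |s - t|)
    (harc : ∀ t ∈ Set.Icc a b, ‖c' t‖ = 1)
    (hinj : Set.InjOn c (Set.Icc a b))
    (t0 : ℝ) (ht0 : t0 ∈ Set.Ioo a b) :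
    ∃ δ > 0, ∀ y ∈ Metric.ball (c t0) (δ / 2),
      ∃! p, p ∈ c '' Set.Ioo a b ∩ Metric.ball (c t0) δ ∧
        dist y p = Metric.infDist y (c '' Set.Ioo a b ∩ Metric.ball (c t0) δ) := by
  have hK : LipschitzOnWith L.toNNReal c' (Icc a b) := .of_dist_le_mul fun s hs t ht => by
    simpa only [dist_eq_norm, Real.norm_eq_abs] using
      (hlip s hs t ht).trans (by gcongr; exact Real.le_coe_toNNReal L)
  have hc : ContinuousOn c (Icc a b) := fun u hu => (hderiv u hu).continuousAt.continuousWithinAt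
  have hsmall : ∀ᶠ r in 𝓝 (0 : ℝ), r < t0 - a ∧ r < b - t0 ∧ (L.toNNReal : ℝ) * (4 * r) < 1 :=
    (eventually_lt_nhds (sub_pos.2 ht0.1)).and ((eventually_lt_nhds (sub_pos.2 ht0.2)).and
      ((by fun_prop : Continuous fun r : ℝ => (L.toNNReal : ℝ) * (4 * r)).continuousAt.eventually_lt
        continuousAt_const (by simp)))
  obtain ⟨r, ⟨hra, hrb, hrK⟩, hr : 0 < r⟩ := ((hsmall.filter_mono nhdsWithin_le_nhds).and
    (eventually_mem_nhdsWithin : ∀ᶠ r in 𝓝[>] (0 : ℝ), r ∈ Ioi 0)).exists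
  set J := Icc (t0 - r) (t0 + r)
  have hJ : J ⊆ Ioo a b := Icc_subset_Ioo (by linarith) (by linarith)
  have hJab : J ⊆ Icc a b := hJ.trans Ioo_subset_Icc_self
  obtain ⟨δ, hδ, hloc⟩ := exists_pos_forall_dist_lt_mem_of_injOn isCompact_Icc hc hinj
    (Ioo_subset_Icc_self ht0) (Icc_mem_nhds (by linarith) (by linarith) : J ∈ 𝓝 t0)
  refine ⟨min δ r, lt_min hδ hr, fun y hy => ?_⟩
  rw [mem_ball] at hy
  refine existsUnique_dist_eq_infDist_image_inter_ball isCompact_Icc (hc.mono hJab)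
    ⟨by linarith, by linarith⟩ hJ
    (fun u hu => hloc u (Ioo_subset_Icc_self hu.1) ((mem_ball.1 hu.2).trans_le (min_le_left _ _)))
    hy ?_
  exact strictConvexOn_Icc_norm_sub_sq (fun u hu => hderiv u (hJab hu)) (hK.mono hJab)
    (fun u hu => harc u (hJab hu)) hrK (by linarith [min_le_right δ r])

/-- An injective, regular `C^{1,1}` arclength-parametrized planar curve admits,
around each interior point, a ball on which the nearest-point projection onto the
local curve segment is well defined (the nearest point exists and is unique). -/
theorem stmt0
    (a b : ℝ) (hab : a < b)
    (c c' : ℝ → EuclideanSpace ℝ (Fin 2)) (L : ℝ)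
    (hderiv : ∀ t ∈ Set.Icc a b, HasDerivAt c (c' t) t)
    (hlip : ∀ s ∈ Set.Icc a b, ∀ t ∈ Set.Icc a b, ‖c' s - c' t‖ ≤ L * |s - t|)
    (harc : ∀ t ∈ Set.Icc a b, ‖c' t‖ = 1)
    (hinj : Set.InjOn c (Set.Icc a b))
    (t0 : ℝ) (ht0 : t0 ∈ Set.Ioo a b) :
    ∃ δ > 0, ∀ y ∈ Metric.ball (c t0) (δ / 2),
      ∃! p, p ∈ c '' Set.Ioo a b ∩ Metric.ball (c t0) δ ∧
        dist y p = Metric.infDist y (c '' Set.Ioo a b ∩ Metric.ball (c t0) δ) :=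
  stmt0_general a b c c' L hderiv hlip harc hinj t0 ht0
end

section
/- Let c : [a,b] → ℝ² be C^{1,1} and parametrized by arclength with a unit normal ν that is Lipschitz with constant L. Suppose y ∈ ℝ² and t¹ < t² in (a,b) satisfy c(tⁱ) − y = λ ν(tⁱ) for i = 1, 2 with the same λ > 0. Then there exist ξ₁, ξ₂ ∈ (t¹, t²) such that |(ċ¹(ξ₁), ċ²(ξ₂))| · |t¹ − t²| ≤ L λ |t¹ − t²|, where ċ¹, ċ² denote the components of the derivative of c. -/
/-!
The mean value theorem, applied to each coordinate of `c` separately, gives points `ξ₁, ξ₂` at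
which the coordinates of `ċ` are those of the chord slope `(c t² - c t¹) / (t² - t¹)`. The chord
is `λ (ν t² - ν t¹)`, since both foot points are at signed distance `λ` from `y`, and the Lipschitz
bound on `ν` finishes the estimate.
-/

open Set

theorem exists_hasDerivAt_clm_apply_eq_slope {E : Type*} [NormedAddCommGroup E] [NormedSpace ℝ E]
    {f f' : ℝ → E} {t₁ t₂ : ℝ} (hlt : t₁ < t₂)
    (hf : ∀ t ∈ Icc t₁ t₂, HasDerivAt f (f' t) t) (ℓ : E →L[ℝ] ℝ) :
    ∃ ξ ∈ Ioo t₁ t₂, ℓ (f' ξ) = (ℓ (f t₂) - ℓ (f t₁)) / (t₂ - t₁) :=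
  have hℓf : ∀ t ∈ Icc t₁ t₂, HasDerivAt (fun t ↦ ℓ (f t)) (ℓ (f' t)) t :=
    fun t ht ↦ ℓ.hasFDerivAt.comp_hasDerivAt t (hf t ht)
  exists_hasDerivAt_eq_slope _ _ hlt
    (fun t ht ↦ (hℓf t ht).continuousAt.continuousWithinAt)
    (fun t ht ↦ hℓf t (Ioo_subset_Icc_self ht))

theorem EuclideanSpace.norm_fin_two (x : EuclideanSpace ℝ (Fin 2)) :
    ‖x‖ = √(x 0 ^ 2 + x 1 ^ 2) := by
  rw [EuclideanSpace.norm_eq, Fin.sum_univ_two, Real.norm_eq_abs, Real.norm_eq_abs, sq_abs,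
    sq_abs]

theorem EuclideanSpace.sqrt_div_sq_add_div_sq_mul_abs (x : EuclideanSpace ℝ (Fin 2)) {h : ℝ}
    (hh : h ≠ 0) : √((x 0 / h) ^ 2 + (x 1 / h) ^ 2) * |h| = ‖x‖ := by
  rw [div_pow, div_pow, ← add_div, Real.sqrt_div' _ (sq_nonneg h), Real.sqrt_sq_eq_abs,
    div_mul_cancel₀ _ (abs_ne_zero.2 hh), EuclideanSpace.norm_fin_two]

theorem norm_sub_eq_of_sub_eq_smul {E : Type*} [SeminormedAddCommGroup E] [NormedSpace ℝ E]
    {p q y u v : E} {r : ℝ} (hp : p - y = r • u) (hq : q - y = r • v) :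
    ‖p - q‖ = |r| * ‖u - v‖ := by
  rw [← sub_sub_sub_cancel_right p q y, hp, hq, ← smul_sub, norm_smul, Real.norm_eq_abs]

theorem stmt9_general
    (a b : ℝ)
    (c c' ν : ℝ → EuclideanSpace ℝ (Fin 2)) (L : ℝ)
    (hderiv : ∀ t ∈ Set.Icc a b, HasDerivAt c (c' t) t)
    (hνlip : ∀ s ∈ Set.Ioo a b, ∀ t ∈ Set.Ioo a b, ‖ν s - ν t‖ ≤ L * |s - t|)
    (y : EuclideanSpace ℝ (Fin 2)) (t1 t2 lam : ℝ)
    (h1 : t1 ∈ Set.Ioo a b) (h2 : t2 ∈ Set.Ioo a b) (hlt : t1 < t2)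
    (hlam : 0 < lam)
    (hfoot1 : c t1 - y = lam • ν t1) (hfoot2 : c t2 - y = lam • ν t2) :
    ∃ ξ1 ∈ Set.Ioo t1 t2, ∃ ξ2 ∈ Set.Ioo t1 t2,
      Real.sqrt ((c' ξ1 0) ^ 2 + (c' ξ2 1) ^ 2) * |t1 - t2| ≤ L * lam * |t1 - t2| := by
  have hc : ∀ t ∈ Icc t1 t2, HasDerivAt c (c' t) t :=
    fun t ht ↦ hderiv t (Icc_subset_Icc h1.1.le h2.2.le ht)
  obtain ⟨ξ1, hξ1, hslope1⟩ := exists_hasDerivAt_clm_apply_eq_slope hlt hc (EuclideanSpace.proj 0)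
  obtain ⟨ξ2, hξ2, hslope2⟩ := exists_hasDerivAt_clm_apply_eq_slope hlt hc (EuclideanSpace.proj 1)
  refine ⟨ξ1, hξ1, ξ2, hξ2, ?_⟩
  have hchord : √((c' ξ1 0) ^ 2 + (c' ξ2 1) ^ 2) * |t1 - t2| = ‖c t2 - c t1‖ := by
    simp only [EuclideanSpace.proj, PiLp.proj_apply] at hslope1 hslope2
    rw [hslope1, hslope2, abs_sub_comm, ← PiLp.sub_apply, ← PiLp.sub_apply,
      EuclideanSpace.sqrt_div_sq_add_div_sq_mul_abs _ (sub_ne_zero.2 hlt.ne')]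
  calc Real.sqrt ((c' ξ1 0) ^ 2 + (c' ξ2 1) ^ 2) * |t1 - t2|
      = lam * ‖ν t2 - ν t1‖ := by
        rw [hchord, norm_sub_eq_of_sub_eq_smul hfoot2 hfoot1, abs_of_pos hlam]
    _ ≤ lam * (L * |t2 - t1|) := mul_le_mul_of_nonneg_left (hνlip t2 h2 t1 h1) hlam.le
    _ = L * lam * |t1 - t2| := by rw [abs_sub_comm]; ring

/-- Mean value theorem step: two foot points `t¹ < t²` with the same signed
distance `λ > 0` to a point `y` yield `ξ₁, ξ₂ ∈ (t¹,t²)` with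
`|(ċ¹(ξ₁), ċ²(ξ₂))|·|t¹ - t²| ≤ L λ |t¹ - t²|`. -/
theorem stmt9
    (a b : ℝ) (hab : a < b)
    (c c' ν : ℝ → EuclideanSpace ℝ (Fin 2)) (L : ℝ)
    (hderiv : ∀ t ∈ Set.Icc a b, HasDerivAt c (c' t) t)
    (harc : ∀ t ∈ Set.Icc a b, ‖c' t‖ = 1)
    (hν : ∀ t ∈ Set.Ioo a b, ‖ν t‖ = 1)
    (hνlip : ∀ s ∈ Set.Ioo a b, ∀ t ∈ Set.Ioo a b, ‖ν s - ν t‖ ≤ L * |s - t|)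
    (y : EuclideanSpace ℝ (Fin 2)) (t1 t2 lam : ℝ)
    (h1 : t1 ∈ Set.Ioo a b) (h2 : t2 ∈ Set.Ioo a b) (hlt : t1 < t2)
    (hlam : 0 < lam)
    (hfoot1 : c t1 - y = lam • ν t1) (hfoot2 : c t2 - y = lam • ν t2) :
    ∃ ξ1 ∈ Set.Ioo t1 t2, ∃ ξ2 ∈ Set.Ioo t1 t2,
      Real.sqrt ((c' ξ1 0) ^ 2 + (c' ξ2 1) ^ 2) * |t1 - t2| ≤ L * lam * |t1 - t2| :=
  stmt9_general a b c c' ν L hderiv hνlip y t1 t2 lam h1 h2 hlt hlam hfoot1 hfoot2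
end

section
/- Let c : [a,b] → ℝ² be C^{1,1} parametrized by arclength with unit normal ν Lipschitz with constant L. Then there is no sequence of points y_n ∈ ℝ² and parameters t_n¹ < t_n² in (a,b) with |t_n¹ − t_n²| → 0 and a common value λ_n ∈ (0, 1/n] such that c(t_nⁱ) − y_n = λ_n ν(t_nⁱ) for i = 1,2 for all n. Equivalently: two distinct foot points with equal small positive signed distance on the same side cannot occur for points arbitrarily close to the curve. -/
open Set Filter Topology

/-!
If `c t - y = λ ν t` and `c s - y = λ ν s`, then the chord `c t - c s = λ (ν t - ν s)` has
length at most `λ Lν (t - s)`. On the other hand, since `c` is parametrized by arclength with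
`L`-Lipschitz velocity, the chord has length at least `(t - s) (1 - L (t - s))`. Hence
`1 ≤ L (t - s) + Lν λ`, which fails once both `t - s` and `λ` are small.
-/

section

variable {E : Type*} [NormedAddCommGroup E] [NormedSpace ℝ E]

theorem mul_norm_deriv_sub_le_norm_sub {c c' : ℝ → E} {s t C : ℝ} (hst : s ≤ t)
    (hc : ∀ x ∈ Icc s t, HasDerivWithinAt c (c' x) (Icc s t) x)
    (hC : ∀ x ∈ Icc s t, ‖c' x - c' s‖ ≤ C) :
    (t - s) * (‖c' s‖ - C) ≤ ‖c t - c s‖ := by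
  have hg : ∀ x ∈ Icc s t,
      HasDerivWithinAt (fun x => c x - x • c' s) (c' x - c' s) (Icc s t) x := fun x hx =>
    (hc x hx).sub (by simpa using (hasDerivWithinAt_id x _).smul_const (c' s))
  have hdev : ‖(c t - c s) - (t - s) • c' s‖ ≤ C * (t - s) := by
    have := Convex.norm_image_sub_le_of_norm_hasDerivWithin_le hg hC (convex_Icc s t)
      (left_mem_Icc.mpr hst) (right_mem_Icc.mpr hst)
    rw [Real.norm_eq_abs, abs_of_nonneg (sub_nonneg.mpr hst)] at this
    convert this using 2
    rw [sub_smul]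
    abel
  have hlin : ‖(t - s) • c' s‖ = (t - s) * ‖c' s‖ := by
    rw [norm_smul, Real.norm_eq_abs, abs_of_nonneg (sub_nonneg.mpr hst)]
  have := norm_sub_norm_le ((t - s) • c' s) ((t - s) • c' s - (c t - c s))
  rw [sub_sub_cancel, norm_sub_rev, hlin] at this
  linarith

theorem one_le_of_sub_eq_smul_of_sub_eq_smul {c c' ν : ℝ → E} {y : E} {s t L Lν lam : ℝ}
    (hst : s < t) (hlam : 0 ≤ lam)
    (hderiv : ∀ x ∈ Icc s t, HasDerivAt c (c' x) x)
    (hlip : ∀ x ∈ Icc s t, ‖c' x - c' s‖ ≤ L * |x - s|)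
    (harc : ‖c' s‖ = 1) (hνlip : ‖ν t - ν s‖ ≤ Lν * |t - s|)
    (hs : c s - y = lam • ν s) (ht : c t - y = lam • ν t) :
    1 ≤ L * (t - s) + Lν * lam := by
  have hd : 0 < t - s := sub_pos.mpr hst
  have hL : 0 ≤ L := by
    have := (norm_nonneg _).trans (hlip t (right_mem_Icc.mpr hst.le))
    rw [abs_of_pos hd] at this
    exact nonneg_of_mul_nonneg_left this hd
  have hC : ∀ x ∈ Icc s t, ‖c' x - c' s‖ ≤ L * (t - s) := fun x hx => by
    refine (hlip x hx).trans (mul_le_mul_of_nonneg_left ?_ hL)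
    rw [abs_of_nonneg (sub_nonneg.mpr hx.1)]
    linarith [hx.2]
  have hlower := mul_norm_deriv_sub_le_norm_sub hst.le
    (fun x hx => (hderiv x hx).hasDerivWithinAt) hC
  have hchord : c t - c s = lam • (ν t - ν s) := by
    rw [smul_sub, ← hs, ← ht, sub_sub_sub_cancel_right]
  have hupper : ‖c t - c s‖ ≤ lam * (Lν * (t - s)) := by
    rw [hchord, norm_smul, Real.norm_eq_abs, abs_of_nonneg hlam, ← abs_of_pos hd]
    exact mul_le_mul_of_nonneg_left hνlip hlam
  rw [harc] at hlower
  have : (t - s) * (1 - L * (t - s)) ≤ (t - s) * (Lν * lam) := by linarith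
  linarith [le_of_mul_le_mul_left this hd]

end

theorem stmt10_general
    (a b : ℝ)
    (c c' ν : ℝ → EuclideanSpace ℝ (Fin 2)) (L Lν : ℝ)
    (hderiv : ∀ t ∈ Set.Icc a b, HasDerivAt c (c' t) t)
    (hlip : ∀ s ∈ Set.Icc a b, ∀ t ∈ Set.Icc a b, ‖c' s - c' t‖ ≤ L * |s - t|)
    (harc : ∀ t ∈ Set.Icc a b, ‖c' t‖ = 1)
    (hνlip : ∀ s ∈ Set.Ioo a b, ∀ t ∈ Set.Ioo a b, ‖ν s - ν t‖ ≤ Lν * |s - t|) :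
    ¬ ∃ (y : ℕ → EuclideanSpace ℝ (Fin 2)) (t1 t2 lam : ℕ → ℝ),
      (∀ n : ℕ, t1 n ∈ Set.Ioo a b ∧ t2 n ∈ Set.Ioo a b ∧ t1 n < t2 n ∧
        0 < lam n ∧ lam n ≤ 1 / (n + 1) ∧
        c (t1 n) - y n = lam n • ν (t1 n) ∧ c (t2 n) - y n = lam n • ν (t2 n)) ∧
      Filter.Tendsto (fun n => |t1 n - t2 n|) Filter.atTop (nhds 0) := by
  rintro ⟨y, t1, t2, lam, h, htend⟩
  have hlam : Tendsto lam atTop (𝓝 0) :=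
    squeeze_zero (fun n => (h n).2.2.2.1.le) (fun n => (h n).2.2.2.2.1)
      tendsto_one_div_add_atTop_nhds_zero_nat
  have hsmall : Tendsto (fun n => L * |t1 n - t2 n| + Lν * lam n) atTop (𝓝 0) := by
    simpa using (htend.const_mul L).add (hlam.const_mul Lν)
  obtain ⟨n, hn⟩ := (hsmall.eventually_lt_const one_pos).exists
  obtain ⟨h1, h2, h12, hlam0, -, hs, ht⟩ := h n
  have hsub : Icc (t1 n) (t2 n) ⊆ Icc a b := Icc_subset_Icc h1.1.le h2.2.le
  have := one_le_of_sub_eq_smul_of_sub_eq_smul h12 hlam0.le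
    (fun x hx => hderiv x (hsub hx))
    (fun x hx => hlip x (hsub hx) _ (hsub (left_mem_Icc.mpr h12.le)))
    (harc _ (hsub (left_mem_Icc.mpr h12.le))) (hνlip _ h2 _ h1) hs ht
  rw [abs_sub_comm, abs_of_pos (sub_pos.mpr h12)] at hn
  linarith

/-- Two distinct foot points with equal small positive signed distance on the same
side cannot occur for points arbitrarily close to a `C^{1,1}` arclength curve with
Lipschitz unit normal. -/
theorem stmt10
    (a b : ℝ) (hab : a < b)
    (c c' ν : ℝ → EuclideanSpace ℝ (Fin 2)) (L Lν : ℝ)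
    (hderiv : ∀ t ∈ Set.Icc a b, HasDerivAt c (c' t) t)
    (hlip : ∀ s ∈ Set.Icc a b, ∀ t ∈ Set.Icc a b, ‖c' s - c' t‖ ≤ L * |s - t|)
    (harc : ∀ t ∈ Set.Icc a b, ‖c' t‖ = 1)
    (hinj : Set.InjOn c (Set.Icc a b))
    (hν : ∀ t ∈ Set.Ioo a b, ‖ν t‖ = 1 ∧ (inner ℝ (ν t) (c' t) : ℝ) = 0)
    (hνlip : ∀ s ∈ Set.Ioo a b, ∀ t ∈ Set.Ioo a b, ‖ν s - ν t‖ ≤ Lν * |s - t|) :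
    ¬ ∃ (y : ℕ → EuclideanSpace ℝ (Fin 2)) (t1 t2 lam : ℕ → ℝ),
      (∀ n : ℕ, t1 n ∈ Set.Ioo a b ∧ t2 n ∈ Set.Ioo a b ∧ t1 n < t2 n ∧
        0 < lam n ∧ lam n ≤ 1 / (n + 1) ∧
        c (t1 n) - y n = lam n • ν (t1 n) ∧ c (t2 n) - y n = lam n • ν (t2 n)) ∧
      Filter.Tendsto (fun n => |t1 n - t2 n|) Filter.atTop (nhds 0) :=
  stmt10_general a b c c' ν L Lν hderiv hlip harc hνlip
end

section
/- Let K ⊂ ℝ^n be closed with locally unique and continuous nearest-point projection P near a point x ∈ K, and let d(y) = dist(y, K)² be differentiable off K with ∇d(y) = 2(y − P(y)). If y_i → y ∈ K with y_i ∉ K and the unit vectors (y_i − P(y_i))/|y_i − P(y_i)| converge to a vector ν(y), then the (unsigned) distance function dist(·, K) is not differentiable at y, but the signed distance (with consistent sign choice) has gradient converging to ν(y); in particular the signed distance is C¹ up to K. -/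
/-!
At `y ∈ K` the unsigned distance attains its minimum `0`, so differentiability would force a
zero derivative there. Off `K` the gradient of the signed distance is `ν ∘ P`, which is
continuous at `y`; hence along the normal ray `s ↦ P(yᵢ) + s • ν(P(yᵢ))` the signed distance
has slope at least `1/2` wherever it is positive. The ray passes through `yᵢ`, where the signed
distance is positive (its sign is read off from the unit vectors converging to `ν(y)`), so the
signed distance grows at rate `1/2` from there on, and letting `i → ∞` gives
`dist (y + t • ν(y), K) ≥ t / 2` for small `t > 0`. The gradients `ν(P(yᵢ))` converge to `ν(y)`
by continuity of `P` and `ν`.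
-/

open Set Metric Filter Topology RealInnerProductSpace

theorem add_mul_sub_le_of_hasDerivWithinAt_gt_of_pos {φ φ' : ℝ → ℝ} {a b c : ℝ}
    (hφ : ContinuousOn φ (Icc a b)) (ha : 0 < φ a) (hc : 0 ≤ c)
    (hderiv : ∀ x ∈ Ico a b, 0 < φ x → HasDerivWithinAt φ (φ' x) (Ici x) x ∧ c < φ' x) :
    ∀ x ∈ Icc a b, φ a + c * (x - a) ≤ φ x := by
  set s := {x | φ a + c * (x - a) ≤ φ x}
  have hs : IsClosed (s ∩ Icc a b) := by
    rw [inter_comm]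
    exact ((continuousOn_const.add (continuousOn_const.mul
      (continuousOn_id.sub continuousOn_const))).prodMk hφ).preimage_isClosed_of_isClosed
      isClosed_Icc (isClosed_le continuous_fst continuous_snd)
  refine fun x hx => hs.Icc_subset_of_forall_exists_gt (by simp [s]) ?_ hx
  rintro x ⟨hxs, hxab⟩ z hz
  have hx_pos : 0 < φ x := by
    have : 0 ≤ c * (x - a) := mul_nonneg hc (sub_nonneg.2 hxab.1)
    exact ha.trans_le (by simp only [s, mem_ofPred_eq] at hxs; linarith)
  obtain ⟨hd, hcd⟩ := hderiv x hxab hx_pos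
  have hslope : ∀ᶠ w in 𝓝[>] x, c < slope φ x w :=
    (hasDerivWithinAt_iff_tendsto_slope' (lt_irrefl x)).1 hd.Ioi_of_Ici (Ioi_mem_nhds hcd)
  obtain ⟨w, hcw, hw⟩ := (hslope.and (Ioc_mem_nhdsGT hz)).exists
  refine ⟨w, ?_, hw⟩
  rw [slope_def_field, lt_div_iff₀ (sub_pos.2 hw.1)] at hcw
  simp only [s, mem_ofPred_eq] at hxs ⊢
  linarith

theorem IsLocalMin.not_differentiableAt_of_linear_growth {E : Type*} [NormedAddCommGroup E]
    [NormedSpace ℝ E] {f : E → ℝ} {y v : E} {c : ℝ} (hmin : IsLocalMin f y) (hc : 0 < c)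
    (hgrowth : ∀ᶠ t in 𝓝[>] 0, f y + c * t ≤ f (y + t • v)) : ¬ DifferentiableAt ℝ f y := by
  intro hf
  have hline : HasDerivAt (fun t : ℝ => y + t • v) v 0 := by
    simpa using ((hasDerivAt_id (0 : ℝ)).smul_const v).const_add y
  have hderiv : HasDerivAt (fun t : ℝ => f (y + t • v)) 0 0 := by
    have hf0 := hmin.hasFDerivAt_eq_zero hf.hasFDerivAt ▸ hf.hasFDerivAt
    exact hf0.comp_hasDerivAt_of_eq 0 hline (by simp)
  have hslope : Tendsto (slope (fun t : ℝ => f (y + t • v)) 0) (𝓝[>] 0) (𝓝 0) :=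
    (hasDerivAt_iff_tendsto_slope.1 hderiv).mono_left (nhdsWithin_mono 0 fun t ht => ne_of_gt ht)
  have hc_le : ∀ᶠ t in 𝓝[>] 0, c ≤ slope (fun t : ℝ => f (y + t • v)) 0 t := by
    filter_upwards [hgrowth, self_mem_nhdsWithin] with t ht (ht0 : 0 < t)
    rw [slope_def_field, le_div_iff₀ (by simpa using ht0)]
    simp only [zero_smul, add_zero, sub_zero]
    linarith
  linarith [ge_of_tendsto hslope hc_le]

section InnerProductSpace

variable {E : Type*} [NormedAddCommGroup E] [InnerProductSpace ℝ E]

theorem HasGradientAt.hasDerivAt_comp_add_smul [CompleteSpace E] {f : E → ℝ} {G p u : E} {s : ℝ}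
    (h : HasGradientAt f G (p + s • u)) : HasDerivAt (fun t : ℝ => f (p + t • u)) ⟪G, u⟫ s := by
  have hline : HasDerivAt (fun t : ℝ => p + t • u) u s := by
    simpa using ((hasDerivAt_id s).smul_const u).const_add p
  exact h.hasFDerivAt.comp_hasDerivAt s hline

theorem real_inner_ge_of_norm_sub_le {e a b : E} {ε : ℝ} (he : ‖e‖ = 1) (ha : ‖a - e‖ ≤ ε)
    (hb : ‖b - e‖ ≤ ε) : 1 - 2 * ε - ε ^ 2 ≤ ⟪a, b⟫ := by
  have hsplit : ⟪a, b⟫ = ⟪e, e⟫ + ⟪a - e, e⟫ + ⟪e, b - e⟫ + ⟪a - e, b - e⟫ := by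
    simp only [inner_sub_left, inner_sub_right]; ring
  have hee : ⟪e, e⟫ = 1 := by rw [real_inner_self_eq_norm_sq, he, one_pow]
  have hae := neg_le_of_abs_le (abs_real_inner_le_norm (a - e) e)
  have heb := neg_le_of_abs_le (abs_real_inner_le_norm e (b - e))
  have habe := neg_le_of_abs_le (abs_real_inner_le_norm (a - e) (b - e))
  have hprod : ‖a - e‖ * ‖b - e‖ ≤ ε ^ 2 := by
    rw [sq]; exact mul_le_mul ha hb (norm_nonneg _) ((norm_nonneg _).trans ha)
  rw [he] at hae heb
  linarith

theorem continuousAt_of_abs_eq_infDist {X : Type*} [PseudoMetricSpace X] {f : X → ℝ} {K : Set X}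
    {z : X} (hz : z ∈ K) (habs : ∀ᶠ w in 𝓝 z, |f w| = infDist w K) : ContinuousAt f z := by
  have hfz : f z = 0 := by
    simpa [infDist_zero_of_mem hz] using habs.self_of_nhds
  have hdist : Tendsto (fun w => infDist w K) (𝓝 z) (𝓝 0) := by
    simpa [infDist_zero_of_mem hz] using (continuous_infDist_pt K).tendsto z
  rw [ContinuousAt, hfz]
  exact squeeze_zero_norm' (habs.mono fun w hw => (Real.norm_eq_abs _).trans_le hw.le) hdist

theorem inv_smul_eq_of_sub_eq_smul {z p ν : E} {s : ℝ} (hzp : z ≠ p) (h : z - p = s • ν) :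
    s⁻¹ • (z - p) = ν := by
  have hs : s ≠ 0 := by
    rintro rfl
    exact hzp (sub_eq_zero.1 (by simpa using h))
  rw [h, inv_smul_smul₀ hs]

theorem eventually_pos_of_tendsto_normalize_smul {ι : Type*} {l : Filter ι} {s : ι → ℝ}
    {w : ι → E} {e : E} (he : e ≠ 0) (hw : Tendsto w l (𝓝 e))
    (h : Tendsto (fun i => ‖s i • w i‖⁻¹ • (s i • w i)) l (𝓝 e)) : ∀ᶠ i in l, 0 < s i := by
  have hinner : Tendsto (fun i => ⟪‖s i • w i‖⁻¹ • (s i • w i), w i⟫) l (𝓝 ⟪e, e⟫) := h.inner hw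
  filter_upwards [hinner.eventually_const_lt (real_inner_self_pos.2 he)] with i hi
  rw [real_inner_smul_left, real_inner_smul_left, real_inner_self_eq_norm_sq] at hi
  by_contra hs
  have : ‖s i • w i‖⁻¹ * (s i * ‖w i‖ ^ 2) ≤ 0 :=
    mul_nonpos_of_nonneg_of_nonpos (inv_nonneg.2 (norm_nonneg _))
      (mul_nonpos_of_nonpos_of_nonneg (not_lt.1 hs) (sq_nonneg _))
  linarith

section Ray

variable [CompleteSpace E]

theorem add_mul_sub_le_comp_add_smul {f : E → ℝ} {G : E → E} {p u : E} {r T c : ℝ}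
    (hc : 0 ≤ c) (hf : ∀ s ∈ Icc r T, ContinuousAt f (p + s • u)) (hr : 0 < f (p + r • u))
    (hG : ∀ s ∈ Ico r T, 0 < f (p + s • u) →
      HasGradientAt f (G (p + s • u)) (p + s • u) ∧ c < ⟪G (p + s • u), u⟫) :
    ∀ t ∈ Icc r T, f (p + r • u) + c * (t - r) ≤ f (p + t • u) := by
  refine add_mul_sub_le_of_hasDerivWithinAt_gt_of_pos (φ := fun s => f (p + s • u))
    (φ' := fun s => ⟪G (p + s • u), u⟫) (fun s hs => ?_) hr hc fun s hs hpos => ?_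
  · exact ((hf s hs).comp (f := fun s : ℝ => p + s • u) (by fun_prop)).continuousWithinAt
  · obtain ⟨hgrad, hcG⟩ := hG s hs hpos
    exact ⟨hgrad.hasDerivAt_comp_add_smul.hasDerivWithinAt, hcG⟩

variable {K U : Set E} {N : E → E} {f : E → ℝ}

theorem half_le_infDist_add_smul_of_near_normal {y e p u : E} {δ r t : ℝ} (he : ‖e‖ = 1)
    (hδU : ball y δ ⊆ U) (hδN : ∀ w ∈ ball y δ, ‖N w - e‖ ≤ 1 / 8)
    (habs : ∀ w ∈ U, |f w| = infDist w K) (hcont : ∀ w ∈ U, ContinuousAt f w)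
    (hgrad : ∀ w ∈ U \ K, HasGradientAt f (N w) w)
    (hp : dist p y < δ / 2) (hu : ‖u - e‖ ≤ 1 / 8) (hr : 0 < r) (hfr : f (p + r • u) = r)
    (hrt : r ≤ t) (ht : t ≤ δ / 4) :
    t / 2 ≤ infDist (p + t • u) K := by
  have hu_norm : ‖u‖ ≤ 9 / 8 := by
    have := norm_le_norm_add_norm_sub' u e
    linarith [norm_sub_rev u e]
  have hray : ∀ s ∈ Icc r t, p + s • u ∈ ball y δ := by
    intro s hs
    have hs0 : 0 ≤ s := hr.le.trans hs.1
    have hsu : ‖s • u‖ ≤ δ / 4 * (9 / 8) := by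
      rw [norm_smul, Real.norm_of_nonneg hs0]
      exact mul_le_mul (hs.2.trans ht) hu_norm (norm_nonneg _) (by linarith)
    rw [mem_ball]
    calc dist (p + s • u) y ≤ dist (p + s • u) p + dist p y := dist_triangle _ _ _
      _ < δ := by rw [dist_eq_norm, add_sub_cancel_left]; linarith
  have hgrowth := add_mul_sub_le_comp_add_smul (G := N) (c := 1 / 2) (by norm_num)
    (fun s hs => hcont _ (hδU (hray s hs))) (hfr.symm ▸ hr) (fun s hs hpos => ?_) t ⟨hrt, le_rfl⟩
  · calc t / 2 ≤ f (p + r • u) + 1 / 2 * (t - r) := by rw [hfr]; linarith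
      _ ≤ f (p + t • u) := hgrowth
      _ ≤ |f (p + t • u)| := le_abs_self _
      _ = infDist (p + t • u) K := habs _ (hδU (hray t ⟨hrt, le_rfl⟩))
  · have hq := hray s (Ico_subset_Icc_self hs)
    have hqK : p + s • u ∉ K := fun hK => by
      have := habs _ (hδU hq)
      rw [infDist_zero_of_mem hK, abs_eq_zero] at this
      linarith
    refine ⟨hgrad _ ⟨hδU hq, hqK⟩, ?_⟩
    -- `1 - 2 / 8 - 1 / 64 > 1 / 2`
    have := real_inner_ge_of_norm_sub_le he (hδN _ hq) hu
    linarith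

theorem eventually_half_le_infDist_add_smul {ι : Type*} {l : Filter ι} [l.NeBot] {P : E → E}
    {y e : E} {z : ι → E} (hy : y ∈ K) (hU : U ∈ 𝓝 y) (he : ‖e‖ = 1)
    (habs : ∀ w ∈ U, |f w| = infDist w K) (hcont : ∀ w ∈ U, ContinuousAt f w)
    (hgrad : ∀ w ∈ U \ K, HasGradientAt f (N w) w) (hN : Tendsto N (𝓝 y) (𝓝 e))
    (hz : Tendsto z l (𝓝 y)) (hPz : Tendsto (fun i => P (z i)) l (𝓝 y))
    (hside : ∀ i, z i - P (z i) = f (z i) • N (z i)) (hpos : ∀ᶠ i in l, 0 < f (z i)) :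
    ∀ᶠ t in 𝓝[>] 0, t / 2 ≤ infDist (y + t • e) K := by
  obtain ⟨δ, hδ, hδUN⟩ := Metric.eventually_nhds_iff_ball.1
    ((show ∀ᶠ w in 𝓝 y, w ∈ U from hU).and
      (hN.eventually (closedBall_mem_nhds e (by norm_num : (0 : ℝ) < 1 / 8))))
  have hf0 : Tendsto (fun i => f (z i)) l (𝓝 0) := by
    have hd : Tendsto (fun i => infDist (z i) K) l (𝓝 0) := by
      have h := ((continuous_infDist_pt K).tendsto y).comp hz
      rwa [infDist_zero_of_mem hy] at h
    exact squeeze_zero_norm'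
      ((hz.eventually hU).mono fun i hi => (Real.norm_eq_abs _).trans_le (habs _ hi).le) hd
  filter_upwards [Ioc_mem_nhdsGT (by positivity : (0 : ℝ) < δ / 4)] with t ⟨ht0, htδ⟩
  have hray : ∀ᶠ i in l, t / 2 ≤ infDist (P (z i) + t • N (z i)) K := by
    filter_upwards [hpos, hf0.eventually (gt_mem_nhds ht0),
      hPz.eventually (ball_mem_nhds y (half_pos hδ)), hz.eventually (ball_mem_nhds y hδ)]
      with i hfz hlt hPi hzi
    refine half_le_infDist_add_smul_of_near_normal he (fun w hw => (hδUN w hw).1)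
      (fun w hw => mem_closedBall_iff_norm.1 (hδUN w hw).2) habs hcont hgrad hPi
      (mem_closedBall_iff_norm.1 (hδUN _ hzi).2) hfz ?_ hlt.le htδ
    -- the ray from `P (z i)` in direction `N (z i)` passes through `z i` at time `f (z i)`
    rw [← hside i, add_sub_cancel]
  have hlim : Tendsto (fun i => infDist (P (z i) + t • N (z i)) K) l
      (𝓝 (infDist (y + t • e) K)) :=
    ((continuous_infDist_pt K).tendsto _).comp (hPz.add ((hN.comp hz).const_smul t))
  exact ge_of_tendsto hlim hray

end Ray

end InnerProductSpace

theorem stmt11_general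
    (n : ℕ) (K : Set (EuclideanSpace ℝ (Fin n)))
    (y : EuclideanSpace ℝ (Fin n)) (hy : y ∈ K)
    (U : Set (EuclideanSpace ℝ (Fin n))) (hU : IsOpen U) (hyU : y ∈ U)
    (P : EuclideanSpace ℝ (Fin n) → EuclideanSpace ℝ (Fin n))
    (hP : ∀ z ∈ U, P z ∈ K ∧ dist z (P z) = Metric.infDist z K ∧
      ∀ p ∈ K, dist z p = Metric.infDist z K → p = P z)
    (hPc : ContinuousOn P U)
    (sd : EuclideanSpace ℝ (Fin n) → ℝ)
    (νK : EuclideanSpace ℝ (Fin n) → EuclideanSpace ℝ (Fin n))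
    (hsd : ∀ z ∈ U, |sd z| = Metric.infDist z K)
    (hside : ∀ z ∈ U, z - P z = sd z • νK (P z))
    (hνK : ∀ p ∈ K ∩ U, ‖νK p‖ = 1)
    (hνKc : ContinuousOn νK (K ∩ U))
    (g : EuclideanSpace ℝ (Fin n) → EuclideanSpace ℝ (Fin n))
    (hg : ∀ z ∈ U \ K, HasGradientAt sd (g z) z ∧ g z = (sd z)⁻¹ • (z - P z))
    (yseq : ℕ → EuclideanSpace ℝ (Fin n))
    (hseq : ∀ i, yseq i ∈ U \ K)
    (hlim : Filter.Tendsto yseq Filter.atTop (nhds y))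
    (hunit : Filter.Tendsto
      (fun i => ‖yseq i - P (yseq i)‖⁻¹ • (yseq i - P (yseq i)))
      Filter.atTop (nhds (νK y))) :
    ¬ DifferentiableAt ℝ (fun z => Metric.infDist z K) y ∧
    Filter.Tendsto (fun i => g (yseq i)) Filter.atTop (nhds (νK y)) := by
  have hUy : U ∈ 𝓝 y := hU.mem_nhds hyU
  have hPy : P y = y := by
    have h := (hP y hyU).2.1
    rw [infDist_zero_of_mem hy] at h
    exact (dist_eq_zero.1 h).symm
  have hPcy : Tendsto P (𝓝 y) (𝓝 y) := by
    simpa only [hPy] using (hPc.continuousAt hUy).tendsto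
  have hgP : ∀ z ∈ U \ K, g z = νK (P z) := fun z hz => (hg z hz).2.trans
    (inv_smul_eq_of_sub_eq_smul (fun h => hz.2 (h ▸ (hP z hz.1).1)) (hside z hz.1))
  have hνP : Tendsto (fun z => νK (P z)) (𝓝 y) (𝓝 (νK y)) :=
    (hνKc y ⟨hy, hyU⟩).tendsto.comp <| tendsto_nhdsWithin_iff.2
      ⟨hPcy, (eventually_mem_set.2 hUy).and (hPcy.eventually_mem hUy) |>.mono
        fun z hz => ⟨(hP z hz.1).1, hz.2⟩⟩
  have hνseq : Tendsto (fun i => νK (P (yseq i))) atTop (𝓝 (νK y)) := hνP.comp hlim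
  refine ⟨?_, hνseq.congr fun i => (hgP _ (hseq i)).symm⟩
  have hpos : ∀ᶠ i in atTop, 0 < sd (yseq i) :=
    eventually_pos_of_tendsto_normalize_smul (norm_ne_zero_iff.1 (by simp [hνK y ⟨hy, hyU⟩]))
      hνseq (hunit.congr fun i => by rw [hside _ (hseq i).1])
  have hsdc : ∀ z ∈ U, ContinuousAt sd z := by
    intro z hz
    by_cases hzK : z ∈ K
    · exact continuousAt_of_abs_eq_infDist hzK (eventually_of_mem (hU.mem_nhds hz) hsd)
    · exact (hg z ⟨hz, hzK⟩).1.differentiableAt.continuousAt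
  have hgrowth := eventually_half_le_infDist_add_smul hy hUy (hνK y ⟨hy, hyU⟩) hsd hsdc
    (fun z hz => hgP z hz ▸ (hg z hz).1) hνP hlim (hPcy.comp hlim)
    (fun i => hside _ (hseq i).1) hpos
  refine IsLocalMin.not_differentiableAt_of_linear_growth (v := νK y) (c := 1 / 2)
    (Eventually.of_forall fun z => ?_) one_half_pos ?_
  · simp only [infDist_zero_of_mem hy, infDist_nonneg]
  · filter_upwards [hgrowth] with t ht
    rw [infDist_zero_of_mem hy]
    linarith

/-- At a point `y` of `K` approached by points `y_i ∉ K` whose unit directions to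
their projections converge to a normal `ν(y)`: the unsigned distance to `K` is not
differentiable at `y`, while the gradients of the (consistently) signed distance
converge to `ν(y)`, i.e. the signed distance is `C¹` up to `K`. -/
theorem stmt11
    (n : ℕ) (K : Set (EuclideanSpace ℝ (Fin n))) (hK : IsClosed K)
    (y : EuclideanSpace ℝ (Fin n)) (hy : y ∈ K)
    (U : Set (EuclideanSpace ℝ (Fin n))) (hU : IsOpen U) (hyU : y ∈ U)
    (P : EuclideanSpace ℝ (Fin n) → EuclideanSpace ℝ (Fin n))
    (hP : ∀ z ∈ U, P z ∈ K ∧ dist z (P z) = Metric.infDist z K ∧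
      ∀ p ∈ K, dist z p = Metric.infDist z K → p = P z)
    (hPc : ContinuousOn P U)
    (sd : EuclideanSpace ℝ (Fin n) → ℝ)
    (νK : EuclideanSpace ℝ (Fin n) → EuclideanSpace ℝ (Fin n))
    (hsd : ∀ z ∈ U, |sd z| = Metric.infDist z K)
    (hside : ∀ z ∈ U, z - P z = sd z • νK (P z))
    (hνK : ∀ p ∈ K ∩ U, ‖νK p‖ = 1)
    (hνKc : ContinuousOn νK (K ∩ U))
    (g : EuclideanSpace ℝ (Fin n) → EuclideanSpace ℝ (Fin n))
    (hg : ∀ z ∈ U \ K, HasGradientAt sd (g z) z ∧ g z = (sd z)⁻¹ • (z - P z))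
    (yseq : ℕ → EuclideanSpace ℝ (Fin n))
    (hseq : ∀ i, yseq i ∈ U \ K)
    (hlim : Filter.Tendsto yseq Filter.atTop (nhds y))
    (hunit : Filter.Tendsto
      (fun i => ‖yseq i - P (yseq i)‖⁻¹ • (yseq i - P (yseq i)))
      Filter.atTop (nhds (νK y))) :
    ¬ DifferentiableAt ℝ (fun z => Metric.infDist z K) y ∧
    Filter.Tendsto (fun i => g (yseq i)) Filter.atTop (nhds (νK y)) :=
  stmt11_general n K y hy U hU hyU P hP hPc sd νK hsd hside hνK hνKc g hg yseq hseq hlim hunit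
end

section
/- Let S ⊂ ℝ^n be a set, U open, and suppose on U the nearest-point projection P onto S exists and is continuous. Fix y ∈ U \ S. If for some v ∈ ℝ^n and ε > 0 there exist arbitrarily small t > 0 with dist(y+tv, S)² < dist(y, S)² + 2⟨y − P(y), tv⟩ − tε, then there exist arbitrarily small t > 0 with |y − P(y+tv)| < |y − P(y)|, contradicting that P(y) is a nearest point of S to y. Hence liminf_{t↘0} (dist(y+tv,S)² − dist(y,S)²)/t ≥ 2⟨y − P(y), v⟩. -/
/-!
Write `d = infDist · S` and `q = P (y + t • v)`. Expanding `‖y - q‖²` around `y + t • v` gives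
`‖y - q‖² = d(y + tv)² - 2t⟪y - P y, v⟫ - 2t⟪P y - q, v⟫ - t²‖v‖²`,
and continuity of `P` at `y` makes `⟪q - P y, v⟫` small. So if `d²` falls short of its
first-order prediction `d(y)² + 2t⟪y - P y, v⟫` by `tε`, then `q ∈ S` is strictly closer to `y`
than `P y`, which is impossible. The `liminf` bound is the contrapositive; it is not a junk value
because `infDist` is `1`-Lipschitz, so the difference quotient is bounded above as `t ↘ 0`.
-/

open Set Metric Filter Topology
open scoped RealInnerProductSpace

lemma sq_infDist_sub_sq_infDist_le {α : Type*} [PseudoMetricSpace α] (s : Set α) (x y : α) :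
    infDist x s ^ 2 - infDist y s ^ 2 ≤ dist x y * (2 * infDist y s + dist x y) := by
  have hlip := infDist_le_infDist_add_dist (x := x) (y := y) (s := s)
  nlinarith [infDist_nonneg (x := x) (s := s), infDist_nonneg (x := y) (s := s),
    dist_nonneg (x := x) (y := y)]

lemma frequently_nhdsGT_iff {α : Type*} [TopologicalSpace α] [LinearOrder α] [OrderTopology α]
    [NoMaxOrder α] {a : α} {p : α → Prop} :
    (∃ᶠ t in 𝓝[>] a, p t) ↔ ∀ r > a, ∃ t, a < t ∧ t < r ∧ p t := by
  simp only [(nhdsGT_basis a).frequently_iff, mem_Ioo, and_assoc]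

def IsNearestPointMapOn {α : Type*} [PseudoMetricSpace α] (S U : Set α) (P : α → α) : Prop :=
  ∀ z ∈ U, P z ∈ S ∧ dist z (P z) = infDist z S

lemma IsNearestPointMapOn.norm_sub_eq {G : Type*} [SeminormedAddCommGroup G] {S U : Set G}
    {P : G → G} (hP : IsNearestPointMapOn S U P) {z : G} (hz : z ∈ U) :
    ‖z - P z‖ = infDist z S := by
  rw [← dist_eq_norm]
  exact (hP z hz).2

section NormedSpace

variable {E : Type*} [NormedAddCommGroup E] [NormedSpace ℝ E]

lemma tendsto_add_smul_nhdsGT_zero (y v : E) :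
    Tendsto (fun t : ℝ => y + t • v) (𝓝[>] 0) (𝓝 y) :=
  ((continuous_const.add (continuous_id.smul continuous_const)).tendsto' 0 y
    (by simp)).mono_left nhdsWithin_le_nhds

lemma isCoboundedUnder_ge_slope_sq_infDist (S : Set E) (y v : E) :
    IsCoboundedUnder (· ≥ ·) (𝓝[>] 0)
      (fun t : ℝ => (infDist (y + t • v) S ^ 2 - infDist y S ^ 2) / t) := by
  refine IsBoundedUnder.isCoboundedUnder_ge ⟨‖v‖ * (2 * infDist y S + ‖v‖), ?_⟩
  rw [eventually_map]
  filter_upwards [Ioo_mem_nhdsGT one_pos] with t ⟨ht0, ht1⟩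
  have hdist : dist (y + t • v) y = t * ‖v‖ := by
    rw [dist_eq_norm, add_sub_cancel_left, norm_smul, Real.norm_of_nonneg ht0.le]
  have hsq := sq_infDist_sub_sq_infDist_le S (y + t • v) y
  rw [hdist] at hsq
  rw [div_le_iff₀ ht0]
  nlinarith [mul_nonneg (mul_nonneg ht0.le (sub_nonneg.2 ht1.le)) (sq_nonneg ‖v‖)]

end NormedSpace

variable {E : Type*} [NormedAddCommGroup E] [InnerProductSpace ℝ E]

lemma norm_sub_sq_eq_norm_add_smul_sub_sq (y p q v : E) (t : ℝ) :
    ‖y - q‖ ^ 2 = ‖y + t • v - q‖ ^ 2 - 2 * t * ⟪y - p, v⟫ - 2 * t * ⟪p - q, v⟫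
      - t ^ 2 * ‖v‖ ^ 2 := by
  have hinner : ⟪y + t • v - q, t • v⟫ = t * ⟪y - p, v⟫ + t * ⟪p - q, v⟫ + t ^ 2 * ‖v‖ ^ 2 := by
    rw [show y + t • v - q = (y - p) + (p - q) + t • v by abel, inner_add_left, inner_add_left,
      real_inner_smul_right, real_inner_smul_right, real_inner_smul_right, real_inner_smul_left,
      real_inner_self_eq_norm_sq]
    ring
  rw [show y - q = (y + t • v - q) - t • v by abel, norm_sub_sq_real, hinner, norm_smul, mul_pow,
    Real.norm_eq_abs, sq_abs]
  ring

lemma norm_sub_lt_of_sq_norm_add_smul_sub_lt {y p q v : E} {t ε : ℝ} (ht : 0 < t)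
    (hq : ⟪q - p, v⟫ ≤ ε / 2)
    (h : ‖y + t • v - q‖ ^ 2 < ‖y - p‖ ^ 2 + 2 * t * ⟪y - p, v⟫ - t * ε) :
    ‖y - q‖ < ‖y - p‖ := by
  have hpq : ⟪p - q, v⟫ = -⟪q - p, v⟫ := by rw [← inner_neg_left, neg_sub]
  refine lt_of_pow_lt_pow_left₀ 2 (norm_nonneg _) ?_
  rw [norm_sub_sq_eq_norm_add_smul_sub_sq y p q v t, hpq]
  nlinarith [mul_le_mul_of_nonneg_left hq ht.le, mul_nonneg (sq_nonneg t) (sq_nonneg ‖v‖)]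

namespace IsNearestPointMapOn

variable {S U : Set E} {P : E → E} {y : E}

theorem frequently_norm_sub_lt (hP : IsNearestPointMapOn S U P) (hU : U ∈ 𝓝 y)
    (hPc : ContinuousAt P y) {v : E} {ε : ℝ} (hε : 0 < ε)
    (h : ∃ᶠ t in 𝓝[>] (0 : ℝ),
      infDist (y + t • v) S ^ 2 < infDist y S ^ 2 + 2 * t * ⟪y - P y, v⟫ - t * ε) :
    ∃ᶠ t in 𝓝[>] (0 : ℝ), ‖y - P (y + t • v)‖ < ‖y - P y‖ := by
  have hline := tendsto_add_smul_nhdsGT_zero y v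
  have hinner : ∀ᶠ t in 𝓝[>] (0 : ℝ), ⟪P (y + t • v) - P y, v⟫ < ε / 2 := by
    have hlim : Tendsto (fun t : ℝ => ⟪P (y + t • v) - P y, v⟫) (𝓝[>] 0) (𝓝 0) := by
      simpa using ((hPc.tendsto.comp hline).sub_const (P y)).inner tendsto_const_nhds
    exact hlim.eventually (gt_mem_nhds (half_pos hε))
  have hnear : ∀ᶠ t in 𝓝[>] (0 : ℝ), 0 < t ∧ y + t • v ∈ U :=
    eventually_mem_nhdsWithin.and (hline.eventually_mem hU)
  refine (h.and_eventually (hnear.and hinner)).mono ?_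
  rintro t ⟨hlt, ⟨ht, hmem⟩, hq⟩
  rw [← hP.norm_sub_eq hmem, ← hP.norm_sub_eq (mem_of_mem_nhds hU)] at hlt
  exact norm_sub_lt_of_sq_norm_add_smul_sub_lt ht hq.le hlt

theorem two_inner_le_liminf_slope_sq_infDist (hP : IsNearestPointMapOn S U P) (hU : U ∈ 𝓝 y)
    (hPc : ContinuousAt P y) (v : E) :
    2 * ⟪y - P y, v⟫ ≤
      liminf (fun t : ℝ => (infDist (y + t • v) S ^ 2 - infDist y S ^ 2) / t) (𝓝[>] 0) := by
  refine le_of_forall_sub_le fun ε hε =>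
    le_liminf_of_le (isCoboundedUnder_ge_slope_sq_infDist S y v) ?_
  by_contra hfreq
  rw [not_eventually] at hfreq
  have hdrop : ∃ᶠ t in 𝓝[>] (0 : ℝ),
      infDist (y + t • v) S ^ 2 < infDist y S ^ 2 + 2 * t * ⟪y - P y, v⟫ - t * ε := by
    refine (hfreq.and_eventually eventually_mem_nhdsWithin).mono fun t ⟨hlt, ht⟩ => ?_
    rw [not_le, div_lt_iff₀ ht] at hlt
    linarith
  have hnear : ∀ᶠ t in 𝓝[>] (0 : ℝ), ‖y - P y‖ ≤ ‖y - P (y + t • v)‖ :=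
    ((tendsto_add_smul_nhdsGT_zero y v).eventually_mem hU).mono fun t ht => by
      rw [hP.norm_sub_eq (mem_of_mem_nhds hU), ← dist_eq_norm]
      exact infDist_le_dist_of_mem (hP _ ht).1
  obtain ⟨t, hlt, hle⟩ :=
    ((hP.frequently_norm_sub_lt hU hPc hε hdrop).and_eventually hnear).exists
  exact hlt.not_ge hle

end IsNearestPointMapOn

theorem stmt15_general
    (n : ℕ) (S : Set (EuclideanSpace ℝ (Fin n)))
    (U : Set (EuclideanSpace ℝ (Fin n))) (hU : IsOpen U)
    (P : EuclideanSpace ℝ (Fin n) → EuclideanSpace ℝ (Fin n))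
    (hP : ∀ z ∈ U, P z ∈ S ∧ dist z (P z) = Metric.infDist z S)
    (hPc : ContinuousOn P U)
    (y : EuclideanSpace ℝ (Fin n)) (hy : y ∈ U) :
    (∀ v : EuclideanSpace ℝ (Fin n), ∀ ε > (0:ℝ),
      (∀ r > (0:ℝ), ∃ t : ℝ, 0 < t ∧ t < r ∧
        (Metric.infDist (y + t • v) S) ^ 2 <
          (Metric.infDist y S) ^ 2 + 2 * t * (inner ℝ (y - P y) v : ℝ) - t * ε) →
      ∀ r > (0:ℝ), ∃ t : ℝ, 0 < t ∧ t < r ∧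
        ‖y - P (y + t • v)‖ < ‖y - P y‖) ∧
    (∀ v : EuclideanSpace ℝ (Fin n),
      2 * (inner ℝ (y - P y) v : ℝ) ≤
        Filter.liminf
          (fun t : ℝ =>
            ((Metric.infDist (y + t • v) S) ^ 2 - (Metric.infDist y S) ^ 2) / t)
          (nhdsWithin 0 (Set.Ioi 0))) := by
  have hP : IsNearestPointMapOn S U P := hP
  have hUy : U ∈ 𝓝 y := hU.mem_nhds hy
  have hPy : ContinuousAt P y := hPc.continuousAt hUy
  refine ⟨fun v ε hε h => ?_, hP.two_inner_le_liminf_slope_sq_infDist hUy hPy⟩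
  rw [← frequently_nhdsGT_iff] at h ⊢
  exact hP.frequently_norm_sub_lt hUy hPy hε h

/-- The `liminf` lower bound for the one-sided derivative of the squared distance:
if the squared distance dropped faster than `2⟨y - P y, v⟩` along arbitrarily small
`t > 0`, then `P(y+tv)` would beat `P y`, a contradiction; hence
`liminf_{t↘0} (d(y+tv) - d(y))/t ≥ 2⟨y - P y, v⟩`. -/
theorem stmt15
    (n : ℕ) (S : Set (EuclideanSpace ℝ (Fin n)))
    (U : Set (EuclideanSpace ℝ (Fin n))) (hU : IsOpen U)
    (P : EuclideanSpace ℝ (Fin n) → EuclideanSpace ℝ (Fin n))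
    (hP : ∀ z ∈ U, P z ∈ S ∧ dist z (P z) = Metric.infDist z S)
    (hPc : ContinuousOn P U)
    (y : EuclideanSpace ℝ (Fin n)) (hy : y ∈ U) (hyS : y ∉ S) :
    (∀ v : EuclideanSpace ℝ (Fin n), ∀ ε > (0:ℝ),
      (∀ r > (0:ℝ), ∃ t : ℝ, 0 < t ∧ t < r ∧
        (Metric.infDist (y + t • v) S) ^ 2 <
          (Metric.infDist y S) ^ 2 + 2 * t * (inner ℝ (y - P y) v : ℝ) - t * ε) →
      ∀ r > (0:ℝ), ∃ t : ℝ, 0 < t ∧ t < r ∧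
        ‖y - P (y + t • v)‖ < ‖y - P y‖) ∧
    (∀ v : EuclideanSpace ℝ (Fin n),
      2 * (inner ℝ (y - P y) v : ℝ) ≤
        Filter.liminf
          (fun t : ℝ =>
            ((Metric.infDist (y + t • v) S) ^ 2 - (Metric.infDist y S) ^ 2) / t)
          (nhdsWithin 0 (Set.Ioi 0))) :=
  stmt15_general n S U hU P hP hPc y hy
end
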